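/- arXiv:1102.0020 — 2 statements merged into one kernel-verified Lean document; each statement's English description precedes it below -/
import Mathlib

section
/- Let K = 𝔽₂. Suppose given ℤ-indexed chain complexes of K-vector spaces B^∞ and B^n for each integer n ≥ 0 such that: (i) dim_K H_m(B^∞) = 1 for every m ≥ 0 and H_m(B^∞) = 0 for every m < 0; (ii) dim_K H_0(B^0) = 1 and H_m(B^0) = 0 for every m ≠ 0; (iii) for each n ≥ 1 there is a short exact sequence of chain complexes 0 → B^0 → B^n → Σ B^{n-1} → 0; and (iv) for each n ≥ 0 there is a short exact sequence of chain complexes 0 → B^n → B^∞ → Σ^{n+1} B^∞ → 0. Then for every n ≥ 0 and every integer m: dim_K H_m(B^n) = 1 if 0 ≤ m ≤ n, and H_m(B^n) = 0 otherwise. -/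
open CategoryTheory

noncomputable section

/-- `K = 𝔽₂`, the field with two elements. -/
abbrev Ktwo : Type := ZMod 2

/-- `π = {1, σ}`, the group of order two, written multiplicatively. -/
abbrev PiGrp : Type := Multiplicative (ZMod 2)

/-- The group algebra `Kπ`. -/
abbrev KPi : Type := MonoidAlgebra Ktwo PiGrp

/-- The generator `σ` of `π`, viewed in the group algebra `Kπ`. -/
def sigmaEl : KPi := MonoidAlgebra.of Ktwo PiGrp (Multiplicative.ofAdd 1)

/-- The element `1 + σ` of `Kπ`. -/
def tEl : KPi := 1 + sigmaEl

lemma KPi_add_self (x : KPi) : x + x = 0 := by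
  rw [← two_smul Ktwo x, show (2 : Ktwo) = 0 by decide, zero_smul]

lemma tEl_mul_tEl : tEl * tEl = 0 := by
  have h1 : sigmaEl * sigmaEl = 1 := by
    rw [sigmaEl, ← map_mul,
      show (Multiplicative.ofAdd (1 : ZMod 2)) * Multiplicative.ofAdd 1 = 1 by decide, map_one]
  have h2 : tEl * tEl = (1 + sigmaEl * sigmaEl) + (sigmaEl + sigmaEl) := by rw [tEl]; ring
  rw [h2, h1, KPi_add_self, KPi_add_self, add_zero]

section Builders

variable {A : Type} [CommRing A] {V : Type} [AddCommGroup V] [Module A V]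

/-- The modules of the truncated complex: `V` in degrees `0 ≤ i ≤ n`, zero elsewhere,
realized as submodules of `V`. -/
def stripS (A : Type) [CommRing A] (V : Type) [AddCommGroup V] [Module A V] (n : ℤ) :
    ℤ → Submodule A V := fun i => if 0 ≤ i ∧ i ≤ n then ⊤ else ⊥

/-- The chain complex which is `V` in degrees `0 ≤ i ≤ n` and zero elsewhere, with every
differential equal to the square-zero endomorphism `f`. -/
def stripC (f : V →ₗ[A] V) (hf : ∀ x, f (f x) = 0) (n : ℤ) :
    ChainComplex (ModuleCat A) ℤ where
  X i := ModuleCat.of A ↥(stripS A V n i)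
  d i j :=
    if h : j + 1 = i ∧ 1 ≤ i ∧ i ≤ n then
      ModuleCat.ofHom (f.restrict (p := stripS A V n i) (q := stripS A V n j) (fun x _ => by
        have hj : 0 ≤ j ∧ j ≤ n := by omega
        simp [stripS, hj]))
    else 0
  shape i j hij := dif_neg (by
    simp only [ComplexShape.down_Rel] at hij
    tauto)
  d_comp_d' i j k hij hjk := by
    try dsimp only
    by_cases h1 : j + 1 = i ∧ 1 ≤ i ∧ i ≤ n
    · by_cases h2 : k + 1 = j ∧ 1 ≤ j ∧ j ≤ n
      · rw [dif_pos h1, dif_pos h2]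
        ext x
        try refine Subtype.ext ?_
        exact hf x.1
      · rw [dif_neg h2, CategoryTheory.Limits.comp_zero]
    · rw [dif_neg h1, CategoryTheory.Limits.zero_comp]

/-- The modules of the unbounded-above complex: `V` in degrees `i ≥ 0`, zero elsewhere. -/
def rayS (A : Type) [CommRing A] (V : Type) [AddCommGroup V] [Module A V] :
    ℤ → Submodule A V := fun i => if 0 ≤ i then ⊤ else ⊥

/-- The chain complex which is `V` in degrees `i ≥ 0` and zero elsewhere, with every
differential equal to the square-zero endomorphism `f`. -/
def rayC (f : V →ₗ[A] V) (hf : ∀ x, f (f x) = 0) :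
    ChainComplex (ModuleCat A) ℤ where
  X i := ModuleCat.of A ↥(rayS A V i)
  d i j :=
    if h : j + 1 = i ∧ 1 ≤ i then
      ModuleCat.ofHom (f.restrict (p := rayS A V i) (q := rayS A V j) (fun x _ => by
        have hj : 0 ≤ j := by omega
        simp [rayS, hj]))
    else 0
  shape i j hij := dif_neg (by
    simp only [ComplexShape.down_Rel] at hij
    tauto)
  d_comp_d' i j k hij hjk := by
    try dsimp only
    by_cases h1 : j + 1 = i ∧ 1 ≤ i
    · by_cases h2 : k + 1 = j ∧ 1 ≤ j
      · rw [dif_pos h1, dif_pos h2]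
        ext x
        try refine Subtype.ext ?_
        exact hf x.1
      · rw [dif_neg h2, CategoryTheory.Limits.comp_zero]
    · rw [dif_neg h1, CategoryTheory.Limits.zero_comp]

/-- The `k`-fold suspension `Σ^k C` of a chain complex, with `(Σ^k C)_i = C_{i-k}`. -/
def shiftC (k : ℤ) (C : ChainComplex (ModuleCat A) ℤ) : ChainComplex (ModuleCat A) ℤ where
  X i := C.X (i - k)
  d i j := C.d (i - k) (j - k)
  shape i j hij := C.shape _ _ (fun hc => hij (by
    simp only [ComplexShape.down_Rel] at hc ⊢
    omega))
  d_comp_d' i j l _ _ := C.d_comp_d _ _ _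

end Builders

/-!
The long exact homology sequence of `0 → B^n → B^∞ → Σ^{n+1} B^∞ → 0` identifies `H_0(B^n)` with
`H_0(B^∞)` for `n ≥ 1`, since `Σ^{n+1} B^∞` has no homology in degrees `0` and `1`. For `n ≥ 1`,
the sequence of `0 → B^0 → B^n → Σ B^{n-1} → 0` then gives `H_m(B^n) ≅ H_{m-1}(B^{n-1})` for
`m ≥ 1`: the connecting map into `H_0(B^0)` vanishes because `H_0(B^0) → H_0(B^n)` is a
surjection (as `H_0(Σ B^{n-1}) = 0`) between one-dimensional spaces, hence injective. Induction on
`n` finishes the proof.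
-/

open Limits Module

section

variable {R : Type*} [Ring R] {ι : Type*} {c : ComplexShape ι}
  {X Y Z : HomologicalComplex (ModuleCat R) c}

def DegreewiseShortExact (f : X ⟶ Y) (g : Y ⟶ Z) : Prop :=
  ∀ i, Function.Injective (f.f i) ∧ Function.Exact (f.f i) (g.f i) ∧ Function.Surjective (g.f i)

namespace DegreewiseShortExact

variable {f : X ⟶ Y} {g : Y ⟶ Z}

lemma comp_eq_zero (h : DegreewiseShortExact f g) : f ≫ g = 0 := by
  ext i x
  exact (h i).2.1.apply_apply_eq_zero x

lemma shortExact (h : DegreewiseShortExact f g) :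
    (ShortComplex.mk f g h.comp_eq_zero).ShortExact :=
  HomologicalComplex.shortExact_of_degreewise_shortExact _ fun i =>
    ModuleCat.shortComplex_shortExact _ (h i).2.1 (h i).1 (h i).2.2

end DegreewiseShortExact

end

namespace CategoryTheory.ShortComplex.ShortExact

variable {C : Type*} [Category C] [Abelian C] {ι : Type*} {c : ComplexShape ι}
  {S : ShortComplex (HomologicalComplex C c)} (hS : S.ShortExact)
include hS

lemma isZero_homology_X₂ (i : ι) (h₁ : IsZero (S.X₁.homology i))
    (h₃ : IsZero (S.X₃.homology i)) : IsZero (S.X₂.homology i) :=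
  (hS.homology_exact₂ i).isZero_X₂ (h₁.eq_of_src _ _) (h₃.eq_of_tgt _ _)

lemma epi_homologyMap_f (i : ι) (h₃ : IsZero (S.X₃.homology i)) :
    Epi (HomologicalComplex.homologyMap S.f i) :=
  (hS.homology_exact₂ i).epi_f (h₃.eq_of_tgt _ _)

lemma isIso_homologyMap_f {i j : ι} (hij : c.Rel i j) (hi : IsZero (S.X₃.homology i))
    (hj : IsZero (S.X₃.homology j)) : IsIso (HomologicalComplex.homologyMap S.f j) := by
  have := (hS.homology_exact₁ i j hij).mono_g (hi.eq_of_src _ _)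
  have := hS.epi_homologyMap_f j hj
  exact isIso_of_mono_of_epi _

lemma isIso_homologyMap_g {i j : ι} (hij : c.Rel i j) (hi : IsZero (S.X₁.homology i))
    [Mono (HomologicalComplex.homologyMap S.f j)] :
    IsIso (HomologicalComplex.homologyMap S.g i) := by
  have := (hS.homology_exact₂ i).mono_g (hi.eq_of_src _ _)
  have hδ : hS.δ i j hij = 0 := by
    rw [← cancel_mono (HomologicalComplex.homologyMap S.f j), zero_comp]
    exact hS.δ_comp i j hij
  have := (hS.homology_exact₃ i j hij).epi_f hδ
  exact isIso_of_mono_of_epi _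

end CategoryTheory.ShortComplex.ShortExact

lemma ModuleCat.mono_of_epi_of_finrank_eq {K : Type*} [DivisionRing K] {X Y : ModuleCat K}
    [FiniteDimensional K X] [FiniteDimensional K Y] (f : X ⟶ Y) [Epi f]
    (h : finrank K X = finrank K Y) : Mono f :=
  (ModuleCat.mono_iff_injective f).2 <|
    (LinearMap.injective_iff_surjective_of_finrank_eq_finrank h).2
      ((ModuleCat.epi_iff_surjective f).1 inferInstance)

lemma ModuleCat.finrank_eq_of_iso {K : Type*} [Ring K] {X Y : ModuleCat K} (e : X ≅ Y) :
    finrank K X = finrank K Y :=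
  e.toLinearEquiv.finrank_eq

section Shift

variable {A : Type} [CommRing A]

def shiftC.scIso (k : ℤ) (C : ChainComplex (ModuleCat A) ℤ) (m : ℤ) :
    (shiftC k C).sc m ≅ C.sc (m - k) :=
  ShortComplex.isoMk
    (C.XIsoOfEq (by simp only [ChainComplex.prev]; omega)) (Iso.refl _)
    (C.XIsoOfEq (by simp only [ChainComplex.next]; omega))
    ((C.XIsoOfEq_hom_comp_d _ _).trans (Category.comp_id _).symm)
    ((Category.id_comp _).trans (C.d_comp_XIsoOfEq_hom _ _).symm)

def shiftC.homologyIso (k : ℤ) (C : ChainComplex (ModuleCat A) ℤ) (m : ℤ) :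
    (shiftC k C).homology m ≅ C.homology (m - k) :=
  ShortComplex.homologyMapIso (shiftC.scIso k C m)

end Shift

def HomologyOneDimensionalUpTo {K : Type*} [Field K] (C : ChainComplex (ModuleCat K) ℤ) (n : ℕ) :
    Prop :=
  ∀ m : ℤ, (0 ≤ m ∧ m ≤ (n : ℤ) → finrank K (C.homology m) = 1) ∧
    (m < 0 ∨ (n : ℤ) < m → IsZero (C.homology m))

lemma HomologyOneDimensionalUpTo.of_degreewiseShortExact {K : Type} [Field K]
    {X₁ X₂ X₃ : ChainComplex (ModuleCat K) ℤ} {n : ℕ} (h₁ : HomologyOneDimensionalUpTo X₁ 0)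
    (h₃ : HomologyOneDimensionalUpTo X₃ n) (h₂ : finrank K (X₂.homology 0) = 1)
    {f : X₁ ⟶ X₂} {g : X₂ ⟶ shiftC 1 X₃} (hfg : DegreewiseShortExact f g) :
    HomologyOneDimensionalUpTo X₂ (n + 1) := by
  have hS := hfg.shortExact
  have hX₁ (m : ℤ) (hm : m ≠ 0) : IsZero (X₁.homology m) := (h₁ m).2 (by omega)
  have hshift (m : ℤ) (hm : m - 1 < 0 ∨ (n : ℤ) < m - 1) : IsZero ((shiftC 1 X₃).homology m) :=
    ((h₃ (m - 1)).2 hm).of_iso (shiftC.homologyIso 1 X₃ m)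
  have hmono₀ : Mono (HomologicalComplex.homologyMap f 0) := by
    have := hS.epi_homologyMap_f 0 (hshift 0 (by omega))
    have h₁₀ : finrank K (X₁.homology 0) = 1 := (h₁ 0).1 ⟨le_rfl, le_rfl⟩
    have := finite_of_finrank_eq_succ h₁₀
    have := finite_of_finrank_eq_succ h₂
    exact ModuleCat.mono_of_epi_of_finrank_eq _ (h₁₀.trans h₂.symm)
  intro m
  refine ⟨fun ⟨hm0, hmn⟩ => ?_,
    fun hm => hS.isZero_homology_X₂ m (hX₁ m (by omega)) (hshift m (by omega))⟩
  obtain rfl | hm0 := hm0.eq_or_lt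
  · exact h₂
  have : Mono (HomologicalComplex.homologyMap f (m - 1)) := by
    obtain rfl | hm1 := eq_or_ne m 1
    · exact hmono₀
    · exact (hX₁ (m - 1) (by omega)).mono _
  have := hS.isIso_homologyMap_g (i := m) (j := m - 1) (by simp) (hX₁ m (by omega))
  calc finrank K (X₂.homology m)
      = finrank K ((shiftC 1 X₃).homology m) :=
        ModuleCat.finrank_eq_of_iso (asIso (HomologicalComplex.homologyMap g m))
    _ = finrank K (X₃.homology (m - 1)) := ModuleCat.finrank_eq_of_iso (shiftC.homologyIso 1 X₃ m)
    _ = 1 := (h₃ (m - 1)).1 ⟨by omega, by omega⟩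

/-- The long-exact-sequence induction: given complexes `B^∞` and `B^n`
(`n ≥ 0`) of `K`-vector spaces such that `H_m(B^∞)` is one-dimensional for `m ≥ 0` and zero
for `m < 0`, `H_m(B^0)` is one-dimensional for `m = 0` and zero otherwise, and short exact
sequences `0 → B^0 → B^n → Σ B^{n-1} → 0` (for `n ≥ 1`) and `0 → B^n → B^∞ → Σ^{n+1} B^∞ → 0`,
then `H_m(B^n)` is one-dimensional for `0 ≤ m ≤ n` and zero otherwise. -/
theorem statement6 (Binf : ChainComplex (ModuleCat Ktwo) ℤ)
    (B : ℕ → ChainComplex (ModuleCat Ktwo) ℤ)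
    (hinf1 : ∀ m : ℤ, 0 ≤ m → Module.finrank Ktwo ↥(Binf.homology m) = 1)
    (hinf0 : ∀ m : ℤ, m < 0 → CategoryTheory.Limits.IsZero (Binf.homology m))
    (hB0 : Module.finrank Ktwo ↥((B 0).homology 0) = 1)
    (hB0' : ∀ m : ℤ, m ≠ 0 → CategoryTheory.Limits.IsZero ((B 0).homology m))
    (hses1 : ∀ n : ℕ, 1 ≤ n →
      ∃ (f : B 0 ⟶ B n) (g : B n ⟶ shiftC 1 (B (n - 1))),
        ∀ i : ℤ, Function.Injective (⇑(f.f i)) ∧ Function.Exact (⇑(f.f i)) (⇑(g.f i)) ∧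
          Function.Surjective (⇑(g.f i)))
    (hses2 : ∀ n : ℕ,
      ∃ (f : B n ⟶ Binf) (g : Binf ⟶ shiftC ((n : ℤ) + 1) Binf),
        ∀ i : ℤ, Function.Injective (⇑(f.f i)) ∧ Function.Exact (⇑(f.f i)) (⇑(g.f i)) ∧
          Function.Surjective (⇑(g.f i))) :
    ∀ (n : ℕ) (m : ℤ),
      (0 ≤ m ∧ m ≤ (n : ℤ) → Module.finrank Ktwo ↥((B n).homology m) = 1) ∧
      (m < 0 ∨ (n : ℤ) < m → CategoryTheory.Limits.IsZero ((B n).homology m)) := by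
  have hB₀ : HomologyOneDimensionalUpTo (B 0) 0 := fun m =>
    ⟨fun hm => by rwa [show m = 0 by omega], fun hm => hB0' m (by omega)⟩
  intro n
  induction n with
  | zero => exact hB₀
  | succ n ih =>
    obtain ⟨f, g, hfg⟩ := hses1 (n + 1) (by omega)
    obtain ⟨f', g', hfg'⟩ := hses2 (n + 1)
    have : IsIso (HomologicalComplex.homologyMap f' 0) :=
      (DegreewiseShortExact.shortExact hfg').isIso_homologyMap_f (i := 1) (by simp)
        ((hinf0 _ (by omega)).of_iso (shiftC.homologyIso _ Binf 1))
        ((hinf0 _ (by omega)).of_iso (shiftC.homologyIso _ Binf 0))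
    have hH₀ : finrank Ktwo ((B (n + 1)).homology 0) = 1 :=
      (ModuleCat.finrank_eq_of_iso (asIso (HomologicalComplex.homologyMap f' 0))).trans
        (hinf1 0 le_rfl)
    exact HomologyOneDimensionalUpTo.of_degreewiseShortExact hB₀ ih hH₀ hfg

end
end

section
/- Let X and Y be vector spaces over K = 𝔽₂. For a K-vector space Z, let τ_Z denote the K-linear involution of Z ⊗_K Z that swaps the two tensor factors, and write (Z ⊗ Z)_π = (Z ⊗ Z)/im(1 + τ_Z) for the coinvariants. Then there is a K-linear isomorphism ((X ⊕ Y) ⊗ (X ⊕ Y))_π ≅ (X ⊗ X)_π ⊕ (Y ⊗ Y)_π ⊕ (X ⊗ Y) which sends the class of (x, y) ⊗ (x', y') to ([x ⊗ x'], [y ⊗ y'], x ⊗ y' + x' ⊗ y). -/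
open CategoryTheory

noncomputable section

open scoped TensorProduct

/-- The transposition `τ` of `Z ⊗ Z`, swapping the two tensor factors. -/
def tau (Z : Type) [AddCommGroup Z] [Module Ktwo Z] :
    (Z ⊗[Ktwo] Z) →ₗ[Ktwo] (Z ⊗[Ktwo] Z) :=
  (TensorProduct.comm Ktwo Z Z).toLinearMap

/-- The map `1 + τ` on `Z ⊗ Z`. -/
def onePlusTau (Z : Type) [AddCommGroup Z] [Module Ktwo Z] :
    (Z ⊗[Ktwo] Z) →ₗ[Ktwo] (Z ⊗[Ktwo] Z) :=
  LinearMap.id + tau Z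

/-- The coinvariants `(Z ⊗ Z)_π = (Z ⊗ Z)/im(1 + τ)`. -/
abbrev coinv (Z : Type) [AddCommGroup Z] [Module Ktwo Z] :=
  (Z ⊗[Ktwo] Z) ⧸ LinearMap.range (onePlusTau Z)

/-! In `(X ⊕ Y) ⊗ (X ⊕ Y) = X ⊗ X ⊕ Y ⊗ Y ⊕ X ⊗ Y ⊕ Y ⊗ X` the transposition preserves the first two
summands and swaps the last two, so on coinvariants these collapse into a single copy of `X ⊗ Y`.
That component is read off through `1 + τ` followed by projection to `X ⊗ Y`; since
`(1 + τ)² = 0` this kills `im(1 + τ)` and hence descends to the coinvariants. -/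

lemma add_self_eq_zero_of_zmod_two {M : Type*} [AddCommGroup M] [Module Ktwo M] (m : M) :
    m + m = 0 := by
  rw [← two_smul Ktwo m, show (2 : Ktwo) = 0 by decide, zero_smul]

section Coinvariants

variable {Z W : Type} [AddCommGroup Z] [Module Ktwo Z] [AddCommGroup W] [Module Ktwo W]

@[simp]
lemma tau_tmul (a b : Z) : tau Z (a ⊗ₜ b) = b ⊗ₜ a := rfl

lemma tau_tau (t : Z ⊗[Ktwo] Z) : tau Z (tau Z t) = t :=
  (TensorProduct.comm Ktwo Z Z).symm_apply_apply t

lemma onePlusTau_apply (t : Z ⊗[Ktwo] Z) : onePlusTau Z t = t + tau Z t := rfl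

lemma onePlusTau_onePlusTau (t : Z ⊗[Ktwo] Z) : onePlusTau Z (onePlusTau Z t) = 0 := by
  rw [onePlusTau_apply, onePlusTau_apply, map_add, tau_tau, add_comm (tau Z t) t]
  exact add_self_eq_zero_of_zmod_two _

lemma map_map_tau (f : Z →ₗ[Ktwo] W) (t : Z ⊗[Ktwo] Z) :
    TensorProduct.map f f (tau Z t) = tau W (TensorProduct.map f f t) := by
  induction t with
  | zero => simp
  | tmul a b => rfl
  | add s t hs ht => simp only [map_add, hs, ht]

lemma mk_tmul_comm (a b : Z) :
    (Submodule.Quotient.mk (a ⊗ₜ b) : coinv Z) = Submodule.Quotient.mk (b ⊗ₜ a) := by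
  rw [Submodule.Quotient.eq, sub_eq_add_neg,
    neg_eq_of_add_eq_zero_left (add_self_eq_zero_of_zmod_two _)]
  exact ⟨a ⊗ₜ b, rfl⟩

def coinvMap (f : Z →ₗ[Ktwo] W) : coinv Z →ₗ[Ktwo] coinv W :=
  Submodule.liftQ _ ((LinearMap.range (onePlusTau W)).mkQ ∘ₗ TensorProduct.map f f) <| by
    rintro _ ⟨t, rfl⟩
    rw [LinearMap.mem_ker, LinearMap.comp_apply, Submodule.mkQ_apply,
      Submodule.Quotient.mk_eq_zero, onePlusTau_apply, map_add, map_map_tau]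
    exact ⟨TensorProduct.map f f t, rfl⟩

@[simp]
lemma coinvMap_mk (f : Z →ₗ[Ktwo] W) (t : Z ⊗[Ktwo] Z) :
    coinvMap f (Submodule.Quotient.mk t) = Submodule.Quotient.mk (TensorProduct.map f f t) :=
  rfl

end Coinvariants

section Splitting

variable (X Y : Type) [AddCommGroup X] [Module Ktwo X] [AddCommGroup Y] [Module Ktwo Y]

def crossTerm : coinv (X × Y) →ₗ[Ktwo] X ⊗[Ktwo] Y :=
  Submodule.liftQ _ (TensorProduct.map (LinearMap.fst Ktwo X Y) (LinearMap.snd Ktwo X Y) ∘ₗ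
    onePlusTau (X × Y)) <| by
      rintro _ ⟨t, rfl⟩
      rw [LinearMap.mem_ker, LinearMap.comp_apply, onePlusTau_onePlusTau, map_zero]

@[simp]
lemma crossTerm_mk_tmul (p q : X × Y) :
    crossTerm X Y (Submodule.Quotient.mk (p ⊗ₜ q)) = p.1 ⊗ₜ q.2 + q.1 ⊗ₜ p.2 := by
  simp [crossTerm, onePlusTau_apply]

def coinvProdSplit : coinv (X × Y) →ₗ[Ktwo] coinv X × coinv Y × (X ⊗[Ktwo] Y) :=
  (coinvMap (LinearMap.fst Ktwo X Y)).prod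
    ((coinvMap (LinearMap.snd Ktwo X Y)).prod (crossTerm X Y))

def coinvProdJoin : coinv X × coinv Y × (X ⊗[Ktwo] Y) →ₗ[Ktwo] coinv (X × Y) :=
  (coinvMap (LinearMap.inl Ktwo X Y)).coprod ((coinvMap (LinearMap.inr Ktwo X Y)).coprod
    ((LinearMap.range (onePlusTau (X × Y))).mkQ ∘ₗ
      TensorProduct.map (LinearMap.inl Ktwo X Y) (LinearMap.inr Ktwo X Y)))

lemma coinvProdSplit_comp_join : coinvProdSplit X Y ∘ₗ coinvProdJoin X Y = LinearMap.id := by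
  ext <;> simp [coinvProdSplit, coinvProdJoin]

lemma coinvProdJoin_comp_split : coinvProdJoin X Y ∘ₗ coinvProdSplit X Y = LinearMap.id := by
  ext
  case hr.hl => simpa [coinvProdSplit, coinvProdJoin] using mk_tmul_comm _ _
  all_goals simp [coinvProdSplit, coinvProdJoin]

end Splitting

/-- For `K`-vector spaces `X` and `Y` there is a `K`-linear isomorphism
`((X ⊕ Y) ⊗ (X ⊕ Y))_π ≅ (X ⊗ X)_π ⊕ (Y ⊗ Y)_π ⊕ (X ⊗ Y)` sending the class of
`(x, y) ⊗ (x', y')` to `([x ⊗ x'], [y ⊗ y'], x ⊗ y' + x' ⊗ y)`. -/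
theorem statement7 (X Y : Type) [AddCommGroup X] [Module Ktwo X]
    [AddCommGroup Y] [Module Ktwo Y] :
    ∃ e : coinv (X × Y) ≃ₗ[Ktwo] (coinv X × coinv Y × (X ⊗[Ktwo] Y)),
      ∀ (x x' : X) (y y' : Y),
        e (Submodule.Quotient.mk (((x, y) : X × Y) ⊗ₜ[Ktwo] ((x', y') : X × Y))) =
          (Submodule.Quotient.mk (x ⊗ₜ[Ktwo] x'), Submodule.Quotient.mk (y ⊗ₜ[Ktwo] y'),
            x ⊗ₜ[Ktwo] y' + x' ⊗ₜ[Ktwo] y) :=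
  ⟨.ofLinearMap (coinvProdSplit X Y) (coinvProdJoin X Y) (coinvProdSplit_comp_join X Y)
      (coinvProdJoin_comp_split X Y),
    fun x x' y y' => by simp [coinvProdSplit]⟩

end
end
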